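/- ⋂_{λ ∈ ℝ²} conv(S_λ) ⊆ {(x, y1, y2) ∈ [0,1]³ : y1 = y2}. -/

import Mathlib

/-!
For `λ = (t, 1 - t)` the aggregated constraint reads `x · (t y₁ + (1 - t) y₂) = 1/2`, a hyperbola
in the coordinates `(x, t y₁ + (1 - t) y₂)`. The region `x > 0, x · u ≥ 1/2` above it is convex,
so it contains `conv(S_λ)`. A point of every `conv(S_λ)` therefore satisfies
`x y₂ + t · x (y₁ - y₂) ≥ 1/2` for all real `t`, which forces `x (y₁ - y₂) = 0` with `x > 0`.
-/

open Set

/-- The box `[0,1]³`. -/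
def unitCube : Set (ℝ × ℝ × ℝ) :=
  {p | p.1 ∈ Icc (0:ℝ) 1 ∧ p.2.1 ∈ Icc (0:ℝ) 1 ∧ p.2.2 ∈ Icc (0:ℝ) 1}

/-- `S = {(x,y₁,y₂) ∈ [0,1]³ : x·y₁ = 1/2, x·y₂ = 1/2}`. -/
def setS : Set (ℝ × ℝ × ℝ) :=
  {p ∈ unitCube | p.1 * p.2.1 = 1/2 ∧ p.1 * p.2.2 = 1/2}

/-- The aggregated set `S_λ` with weights `l = (λ₁, λ₂)`. -/
def setAgg (l : ℝ × ℝ) : Set (ℝ × ℝ × ℝ) :=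
  {p ∈ unitCube | l.1 * (p.1 * p.2.1 - 1/2) + l.2 * (p.1 * p.2.2 - 1/2) = 0}

theorem convex_unitCube : Convex ℝ unitCube :=
  (convex_Icc 0 1).prod ((convex_Icc 0 1).prod (convex_Icc 0 1))

theorem LinearMap.convex_setOf_pos_and_le_mul {E : Type*} [AddCommGroup E] [Module ℝ E]
    (f g : E →ₗ[ℝ] ℝ) {c : ℝ} (hc : 0 ≤ c) :
    Convex ℝ {x | 0 < f x ∧ c ≤ f x * g x} := by
  rintro x ⟨hfx, hx⟩ y ⟨hfy, hy⟩ a b ha hb hab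
  simp only [mem_ofPred_eq, map_add, map_smul, smul_eq_mul]
  have hgx : 0 ≤ g x := nonneg_of_mul_nonneg_right (hc.trans hx) hfx
  have hgy : 0 ≤ g y := nonneg_of_mul_nonneg_right (hc.trans hy) hfy
  -- AM-GM on the cross terms, whose product is `(f x * g x) * (f y * g y) ≥ c²`
  have hcross : 2 * c ≤ f x * g y + f y * g x := by
    nlinarith [sq_nonneg (f x * g y - f y * g x), mul_le_mul hx hy hc (hc.trans hx),
      mul_nonneg hfx.le hgy, mul_nonneg hfy.le hgx]
  constructor
  · rcases ha.eq_or_lt with rfl | ha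
    · simp_all
    · nlinarith [mul_pos ha hfx, mul_nonneg hb hfy.le]
  · calc c = a ^ 2 * c + b ^ 2 * c + a * b * (2 * c) := by
          linear_combination (-(1 + a + b) * c) * hab
      _ ≤ a ^ 2 * (f x * g x) + b ^ 2 * (f y * g y) + a * b * (f x * g y + f y * g x) := by
          gcongr
      _ = _ := by ring

def weightedY (t : ℝ) : ℝ × ℝ × ℝ →ₗ[ℝ] ℝ :=
  t • (LinearMap.fst ℝ ℝ ℝ ∘ₗ LinearMap.snd ℝ ℝ (ℝ × ℝ)) +
    (1 - t) • (LinearMap.snd ℝ ℝ ℝ ∘ₗ LinearMap.snd ℝ ℝ (ℝ × ℝ))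

theorem convexHull_setAgg_subset (t : ℝ) :
    convexHull ℝ (setAgg (t, 1 - t)) ⊆
      {p | 0 < p.1 ∧ 1 / 2 ≤ p.1 * (t * p.2.1 + (1 - t) * p.2.2)} := by
  refine convexHull_min ?_
    ((LinearMap.fst ℝ ℝ (ℝ × ℝ)).convex_setOf_pos_and_le_mul (weightedY t) one_half_pos.le)
  rintro p ⟨hp, hagg⟩
  have heq : p.1 * (t * p.2.1 + (1 - t) * p.2.2) = 1 / 2 := by linear_combination hagg
  refine ⟨hp.1.1.lt_of_ne ?_, heq.ge⟩
  rintro h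
  simp [← h] at heq

theorem eq_zero_of_forall_le_add_mul {a b c : ℝ} (h : ∀ t, c ≤ a + t * b) : b = 0 := by
  by_contra hb
  have := h ((c - a - 1) / b)
  rw [div_mul_cancel₀ _ hb] at this
  linarith

theorem stmt7 :
    (⋂ l : ℝ × ℝ, convexHull ℝ (setAgg l)) ⊆
      {p ∈ unitCube | p.2.1 = p.2.2} := by
  intro p hp
  rw [mem_iInter] at hp
  have hcube : p ∈ unitCube := convexHull_min (sep_subset _ _) convex_unitCube (hp (1, 0))
  have hyp (t : ℝ) := convexHull_setAgg_subset t (hp (t, 1 - t))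
  have hslope : p.1 * (p.2.1 - p.2.2) = 0 :=
    eq_zero_of_forall_le_add_mul (a := p.1 * p.2.2) (c := 1 / 2) fun t => by
      linear_combination (hyp t).2
  refine ⟨hcube, ?_⟩
  rcases mul_eq_zero.1 hslope with h | h
  · exact absurd h (hyp 0).1.ne'
  · exact sub_eq_zero.1 h
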